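/- Let G = (V,E) be a graph with no isolated vertices, and consider the component maintenance game where each vertex i is an agent with repair cost C_i = 1, all components are broken with probability 1 unless repaired, and the system works iff the repaired set is a vertex cover (i.e., φ(s) = ∧_{(u,v)∈E}(s_u ∨ s_v)). Then a nonzero action profile s ∈ {0,1}^V is a pure Nash equilibrium if and only if the set K = {i : s_i = 1} is a minimal vertex cover of G; moreover the all-zero profile is also a pure Nash equilibrium. -/
import Mathlib

open scoped Classical

/-- The repaired set covers every edge: the system works. -/
def covers {V : Type*} (G : SimpleGraph V) (s : V → Bool) : Prop :=
  ∀ u v, G.Adj u v → (s u = true ∨ s v = true)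

/-- Agent `i`'s cost: repair cost 1 if repairing, plus 1 if the system is broken. -/
noncomputable def gcost {V : Type*} (G : SimpleGraph V) (i : V) (s : V → Bool) : ℝ :=
  (if s i then 1 else 0) + (if covers G s then 0 else 1)

/-- Pure Nash equilibrium: no agent strictly gains by flipping its own action. -/
def isNE {V : Type*} [DecidableEq V] (G : SimpleGraph V) (s : V → Bool) : Prop :=
  ∀ i, gcost G i s ≤ gcost G i (Function.update s i (!(s i)))

/-- `K` is a vertex cover of `G`. -/
def IsVC {V : Type*} (G : SimpleGraph V) (K : Set V) : Prop :=
  ∀ u v, G.Adj u v → (u ∈ K ∨ v ∈ K)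

/-- `K` is a minimal vertex cover of `G`. -/
def IsMinimalVC {V : Type*} (G : SimpleGraph V) (K : Set V) : Prop :=
  IsVC G K ∧ ∀ K' : Set V, K' ⊂ K → ¬ IsVC G K'

lemma gcost_le_one_of_false {V : Type*} (G : SimpleGraph V) {i : V} {s : V → Bool}
    (h : s i = false) : gcost G i s ≤ 1 := by
  simp only [gcost, h]; split_ifs <;> simp_all

lemma gcost_ge_one_of_true {V : Type*} (G : SimpleGraph V) {i : V} {s : V → Bool}
    (h : s i = true) : 1 ≤ gcost G i s := by
  simp only [gcost, h]; split_ifs <;> norm_num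

lemma gcost_nonneg {V : Type*} (G : SimpleGraph V) (i : V) (s : V → Bool) :
    0 ≤ gcost G i s := by
  unfold gcost; split_ifs <;> norm_num

lemma gcost_eq_two {V : Type*} (G : SimpleGraph V) {i : V} {s : V → Bool}
    (h : s i = true) (hc : ¬ covers G s) : gcost G i s = 2 := by
  simp [gcost, h, hc]; norm_num

lemma gcost_eq_one_t {V : Type*} (G : SimpleGraph V) {i : V} {s : V → Bool}
    (h : s i = true) (hc : covers G s) : gcost G i s = 1 := by
  simp [gcost, h, hc]

lemma gcost_eq_zero {V : Type*} (G : SimpleGraph V) {i : V} {s : V → Bool}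
    (h : s i = false) (hc : covers G s) : gcost G i s = 0 := by
  simp [gcost, h, hc]

lemma gcost_eq_one_f {V : Type*} (G : SimpleGraph V) {i : V} {s : V → Bool}
    (h : s i = false) (hc : ¬ covers G s) : gcost G i s = 1 := by
  simp [gcost, h, hc]

lemma covers_update_false {V : Type*} [DecidableEq V] (G : SimpleGraph V)
    (s : V → Bool) (i : V) :
    covers G (Function.update s i false) ↔ IsVC G ({j | s j = true} \ {i}) := by
  constructor
  · intro h u v huv
    rcases h u v huv with h1 | h1
    · by_cases hu : u = i
      · rw [hu, Function.update_self] at h1; exact absurd h1 (by simp)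
      · rw [Function.update_of_ne hu] at h1; exact Or.inl ⟨h1, hu⟩
    · by_cases hv : v = i
      · rw [hv, Function.update_self] at h1; exact absurd h1 (by simp)
      · rw [Function.update_of_ne hv] at h1; exact Or.inr ⟨h1, hv⟩
  · intro h u v huv
    rcases h u v huv with ⟨h1, h2⟩ | ⟨h1, h2⟩
    · left; rw [Function.update_of_ne h2]; exact h1
    · right; rw [Function.update_of_ne h2]; exact h1

/-- In the component maintenance game on a graph `G` with no isolated vertices and
unit repair costs, a nonzero profile is a pure Nash equilibrium iff its repaired set
is a minimal vertex cover; moreover the all-zero profile is also a pure NE. -/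
theorem stmt_7 {V : Type*} [Fintype V] [DecidableEq V] (G : SimpleGraph V)
    (hiso : ∀ v : V, ∃ u, G.Adj v u) :
    isNE G (fun _ => false) ∧
    ∀ s : V → Bool, (∃ i, s i = true) →
      (isNE G s ↔ IsMinimalVC G {i | s i = true}) := by
  constructor
  · intro i
    refine le_trans (gcost_le_one_of_false G rfl) (gcost_ge_one_of_true G ?_)
    simp
  · rintro s ⟨i0, hi0⟩
    constructor
    · intro hNE
      have hcov : covers G s := by
        by_contra hnc
        have h := hNE i0
        rw [gcost_eq_two G hi0 hnc] at h
        have hub : Function.update s i0 (!(s i0)) i0 = false := by simp [hi0]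
        have := gcost_le_one_of_false G (s := Function.update s i0 (!(s i0))) hub
        linarith
      have hrem : ∀ i, s i = true → ¬ covers G (Function.update s i false) := by
        intro i hi hcu
        have h := hNE i
        rw [gcost_eq_one_t G hi hcov] at h
        have hub : Function.update s i (!(s i)) i = false := by simp [hi]
        have heq : Function.update s i (!(s i)) = Function.update s i false := by
          rw [hi]; rfl
        rw [gcost_eq_zero G hub (heq ▸ hcu)] at h
        linarith
      refine ⟨hcov, ?_⟩
      intro K' hK' hVC
      obtain ⟨i, hiK, hiK'⟩ := Set.exists_of_ssubset hK'
      apply hrem i hiK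
      rw [covers_update_false]
      intro u v huv
      rcases hVC u v huv with h | h
      · exact Or.inl ⟨hK'.1 h, fun he => hiK' (he ▸ h)⟩
      · exact Or.inr ⟨hK'.1 h, fun he => hiK' (he ▸ h)⟩
    · rintro ⟨hVC, hmin⟩ i
      have hcov : covers G s := hVC
      cases hsi : s i with
      | false =>
        rw [gcost_eq_zero G hsi hcov]
        exact gcost_nonneg G _ _
      | true =>
        have hncu : ¬ covers G (Function.update s i false) := by
          rw [covers_update_false]
          apply hmin
          refine ⟨Set.diff_subset, fun hsub => ?_⟩
          have : i ∈ ({j | s j = true} \ {i} : Set V) := hsub hsi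
          exact this.2 rfl
        have heq : Function.update s i (!true) = Function.update s i false := rfl
        have hub : Function.update s i (!true) i = false := by simp
        rw [gcost_eq_one_t G hsi hcov, gcost_eq_one_f G hub (heq ▸ hncu)]
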